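/- Let R be an integral domain, let a, b, c be invertible 2×2 matrices over R, and set t := a ⊗ b ⊗ c (an 8×8 matrix over R). Suppose that t fixes each of the four standard basis vectors e₁₁₁, e₁₂₂, e₂₁₂, e₂₂₁, i.e. t · e = e for e ∈ {e₁₁₁, e₁₂₂, e₂₁₂, e₂₂₁}. Then either t is the 8×8 identity matrix or t = D, where D is the diagonal matrix diag(1, −1, −1, 1, −1, 1, 1, −1) (that is, D · e_{ijk} = e_{ijk} when i + j + k is odd and D · e_{ijk} = −e_{ijk} when i + j + k is even). In particular the pointwise stabilizer of {e₁₁₁, e₁₂₂, e₂₁₂, e₂₂₁} among matrices of the form a ⊗ b ⊗ c has at most two elements. -/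

import Mathlib

open Matrix
open scoped Kronecker

/-- The standard basis vector `e_{ijk}` of `R⁸ ≅ R² ⊗ R² ⊗ R²` (indices written `1`, `2` in
the paper correspond to `0`, `1` in `Fin 2`). -/
def stdVec (R : Type*) [CommRing R] (i j k : Fin 2) : (Fin 2 × Fin 2) × Fin 2 → R :=
  Pi.single ((i, j), k) 1

/-- The diagonal matrix `D = diag(1, −1, −1, 1, −1, 1, 1, −1)`: it multiplies `e_{ijk}` by
`+1` when `i + j + k` is odd (in the paper's `{1,2}`-valued indices, i.e. when the sum of
the corresponding `Fin 2` values is even) and by `−1` otherwise. -/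
def signMatrix (R : Type*) [CommRing R] :
    Matrix ((Fin 2 × Fin 2) × Fin 2) ((Fin 2 × Fin 2) × Fin 2) R :=
  Matrix.diagonal fun p =>
    if (p.1.1.val + p.1.2.val + p.2.val) % 2 = 0 then 1 else -1

/-!
The column of `a ⊗ b ⊗ c` at `e_{ijk}` is `a eᵢ ⊗ b eⱼ ⊗ c eₖ`. If it equals `e_{ijk}`, then
`aᵢᵢ bⱼⱼ cₖₖ = 1`, and this unit cancels from the vanishing products, so all other entries of
column `i` of `a`, column `j` of `b` and column `k` of `c` are zero. The four fixed vectors meet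
both columns of each factor, so `a`, `b`, `c` are diagonal, with diagonals `α`, `β`, `γ` say,
and `t = diag(αᵢ βⱼ γₖ)`. The fixed vectors are exactly the indices of even parity, and the
product of two odd-parity entries of `t` is also a product of two even-parity entries, hence
`1`; so all odd-parity entries equal one `s` with `s² = 1`, and in a domain `s = ±1`.
-/

theorem Matrix.isDiag_of_fin_two {α : Type*} [Zero α] {A : Matrix (Fin 2) (Fin 2) α}
    (h0 : ∀ i ≠ 0, A i 0 = 0) (h1 : ∀ i ≠ 1, A i 1 = 0) : A.IsDiag := by
  intro i j hij
  fin_cases j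
  exacts [h0 i hij, h1 i hij]

section Kronecker

variable {R : Type*} [CommRing R] (a b c : Matrix (Fin 2) (Fin 2) R)

theorem kronecker_mulVec_stdVec_apply (i j k i' j' k' : Fin 2) :
    ((a ⊗ₖ b) ⊗ₖ c *ᵥ stdVec R i j k) ((i', j'), k') = a i' i * b j' j * c k' k := by
  simp [stdVec]

variable {a b c}

theorem mul_mul_eq_ite_of_kronecker_mulVec_stdVec {i j k : Fin 2}
    (h : (a ⊗ₖ b) ⊗ₖ c *ᵥ stdVec R i j k = stdVec R i j k) (i' j' k' : Fin 2) :
    a i' i * b j' j * c k' k = if i' = i ∧ j' = j ∧ k' = k then 1 else 0 := by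
  rw [← kronecker_mulVec_stdVec_apply, h]
  simp [stdVec, Pi.single_apply, and_assoc]

theorem mul_mul_eq_one_of_kronecker_mulVec_stdVec {i j k : Fin 2}
    (h : (a ⊗ₖ b) ⊗ₖ c *ᵥ stdVec R i j k = stdVec R i j k) : a i i * b j j * c k k = 1 := by
  simpa using mul_mul_eq_ite_of_kronecker_mulVec_stdVec h i j k

theorem offDiag_col_eq_zero_of_kronecker_mulVec_stdVec {i j k : Fin 2}
    (h : (a ⊗ₖ b) ⊗ₖ c *ᵥ stdVec R i j k = stdVec R i j k) :
    (∀ i' ≠ i, a i' i = 0) ∧ (∀ j' ≠ j, b j' j = 0) ∧ (∀ k' ≠ k, c k' k = 0) := by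
  have hone := mul_mul_eq_one_of_kronecker_mulVec_stdVec h
  refine ⟨fun i' hi' => ?_, fun j' hj' => ?_, fun k' hk' => ?_⟩
  · have hzero := mul_mul_eq_ite_of_kronecker_mulVec_stdVec h i' j k
    rw [if_neg (by tauto)] at hzero
    linear_combination a i i * hzero - a i' i * hone
  · have hzero := mul_mul_eq_ite_of_kronecker_mulVec_stdVec h i j' k
    rw [if_neg (by tauto)] at hzero
    linear_combination b j j * hzero - b j' j * hone
  · have hzero := mul_mul_eq_ite_of_kronecker_mulVec_stdVec h i j k'
    rw [if_neg (by tauto)] at hzero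
    linear_combination c k k * hzero - c k' k * hone

theorem kronecker_diagonal_eq_diagonal_parity (α β γ : Fin 2 → R)
    (h000 : α 0 * β 0 * γ 0 = 1) (h011 : α 0 * β 1 * γ 1 = 1)
    (h101 : α 1 * β 0 * γ 1 = 1) (h110 : α 1 * β 1 * γ 0 = 1) :
    ∃ s : R, s * s = 1 ∧ (diagonal α ⊗ₖ diagonal β) ⊗ₖ diagonal γ =
      diagonal fun p => if (p.1.1.val + p.1.2.val + p.2.val) % 2 = 0 then 1 else s := by
  generalize hs_def : α 0 * β 0 * γ 1 = s
  have hsp : s * (α 0 * β 1 * γ 0) = 1 := by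
    linear_combination -(α 0 * β 1 * γ 0) * hs_def + α 0 * β 1 * γ 1 * h000 + h011
  have hsq : s * (α 1 * β 0 * γ 0) = 1 := by
    linear_combination -(α 1 * β 0 * γ 0) * hs_def + α 1 * β 0 * γ 1 * h000 + h101
  have hsr : s * (α 1 * β 1 * γ 1) = 1 := by
    linear_combination -(α 1 * β 1 * γ 1) * hs_def + α 1 * β 0 * γ 1 * h011 + h101
  have hpq : (α 0 * β 1 * γ 0) * (α 1 * β 0 * γ 0) = 1 := by
    linear_combination α 1 * β 1 * γ 0 * h000 + h110
  have hs : s * s = 1 := by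
    linear_combination -s ^ 2 * hpq + s * (α 1 * β 0 * γ 0) * hsp + hsq
  have hinv : ∀ x, s * x = 1 → x = s := fun x hx => by linear_combination -x * hs + s * hx
  refine ⟨s, hs, ?_⟩
  rw [diagonal_kronecker_diagonal, diagonal_kronecker_diagonal]
  congr 1
  funext ⟨⟨i, j⟩, k⟩
  fin_cases i <;> fin_cases j <;> fin_cases k <;>
    simp [h000, h011, h101, h110, hs_def, hinv _ hsp, hinv _ hsq, hinv _ hsr]

end Kronecker

theorem kronecker_stabilizer_eq_one_or_sign_general {R : Type*} [CommRing R] [IsDomain R]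
    (a b c : Matrix (Fin 2) (Fin 2) R)
    (h111 : ((a ⊗ₖ b) ⊗ₖ c) *ᵥ stdVec R 0 0 0 = stdVec R 0 0 0)
    (h122 : ((a ⊗ₖ b) ⊗ₖ c) *ᵥ stdVec R 0 1 1 = stdVec R 0 1 1)
    (h212 : ((a ⊗ₖ b) ⊗ₖ c) *ᵥ stdVec R 1 0 1 = stdVec R 1 0 1)
    (h221 : ((a ⊗ₖ b) ⊗ₖ c) *ᵥ stdVec R 1 1 0 = stdVec R 1 1 0) :
    (a ⊗ₖ b) ⊗ₖ c = 1 ∨ (a ⊗ₖ b) ⊗ₖ c = signMatrix R := by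
  obtain ⟨ha0, hb0, hc0⟩ := offDiag_col_eq_zero_of_kronecker_mulVec_stdVec h111
  obtain ⟨-, hb1, hc1⟩ := offDiag_col_eq_zero_of_kronecker_mulVec_stdVec h122
  obtain ⟨ha1, -, -⟩ := offDiag_col_eq_zero_of_kronecker_mulVec_stdVec h212
  obtain ⟨s, hs, hparity⟩ := kronecker_diagonal_eq_diagonal_parity a.diag b.diag c.diag
    (mul_mul_eq_one_of_kronecker_mulVec_stdVec h111) (mul_mul_eq_one_of_kronecker_mulVec_stdVec h122)
    (mul_mul_eq_one_of_kronecker_mulVec_stdVec h212) (mul_mul_eq_one_of_kronecker_mulVec_stdVec h221)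
  rw [(isDiag_of_fin_two ha0 ha1).diagonal_diag, (isDiag_of_fin_two hb0 hb1).diagonal_diag,
    (isDiag_of_fin_two hc0 hc1).diagonal_diag] at hparity
  rcases mul_self_eq_one_iff.mp hs with rfl | rfl
  · left
    simp [hparity]
  · exact Or.inr hparity

/-- Let `R` be an integral domain and `a, b, c` invertible `2×2` matrices
over `R`.  If `t = a ⊗ b ⊗ c` fixes each of `e₁₁₁, e₁₂₂, e₂₁₂, e₂₂₁`, then `t` is either the
identity or the diagonal matrix `D = diag(1, −1, −1, 1, −1, 1, 1, −1)`; in particular the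
pointwise stabilizer of these four vectors among matrices of the form `a ⊗ b ⊗ c` has at
most two elements. -/
theorem kronecker_stabilizer_eq_one_or_sign {R : Type*} [CommRing R] [IsDomain R]
    (a b c : Matrix (Fin 2) (Fin 2) R)
    (ha : IsUnit a.det) (hb : IsUnit b.det) (hc : IsUnit c.det)
    (h111 : ((a ⊗ₖ b) ⊗ₖ c) *ᵥ stdVec R 0 0 0 = stdVec R 0 0 0)
    (h122 : ((a ⊗ₖ b) ⊗ₖ c) *ᵥ stdVec R 0 1 1 = stdVec R 0 1 1)
    (h212 : ((a ⊗ₖ b) ⊗ₖ c) *ᵥ stdVec R 1 0 1 = stdVec R 1 0 1)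
    (h221 : ((a ⊗ₖ b) ⊗ₖ c) *ᵥ stdVec R 1 1 0 = stdVec R 1 1 0) :
    (a ⊗ₖ b) ⊗ₖ c = 1 ∨ (a ⊗ₖ b) ⊗ₖ c = signMatrix R :=
  kronecker_stabilizer_eq_one_or_sign_general a b c h111 h122 h212 h221
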